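/- Let (η, ϕ) be a smooth solution of the two-dimensional water-wave system on [0,T]. Then the energy 𝓗(t) := (g/2)∫₀^{L₁} η(t,x)² dx + (1/2)∬_{Ω(t)} ((∂ₓϕ)² + (∂_yϕ)²)(t,x,y) dx dy is independent of t ∈ [0,T]. -/

import Mathlib

open Real Set MeasureTheory

noncomputable section

/-- `∂ₓϕ(t,x,y)` -/
def phiX (ϕ : ℝ → ℝ → ℝ → ℝ) (t x y : ℝ) : ℝ := deriv (fun x' => ϕ t x' y) x

/-- `∂_yϕ(t,x,y)` -/
def phiY (ϕ : ℝ → ℝ → ℝ → ℝ) (t x y : ℝ) : ℝ := deriv (fun y' => ϕ t x y') y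

/-- `∂ₜϕ(t,x,y)` -/
def phiT (ϕ : ℝ → ℝ → ℝ → ℝ) (t x y : ℝ) : ℝ := deriv (fun s => ϕ s x y) t

/-- `∂ₓη(t,x)` -/
def etaX (η : ℝ → ℝ → ℝ) (t x : ℝ) : ℝ := deriv (fun x' => η t x') x

/-- `∂ₜη(t,x)` -/
def etaT (η : ℝ → ℝ → ℝ) (t x : ℝ) : ℝ := deriv (fun s => η s x) t

/-- the trace `ψ(t,x) = ϕ(t,x,η(t,x))` -/
def psi (η : ℝ → ℝ → ℝ) (ϕ : ℝ → ℝ → ℝ → ℝ) (t x : ℝ) : ℝ := ϕ t x (η t x)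

/-- `∂ₜψ(t,x)` -/
def psiT (η : ℝ → ℝ → ℝ) (ϕ : ℝ → ℝ → ℝ → ℝ) (t x : ℝ) : ℝ :=
  deriv (fun s => psi η ϕ s x) t

/-- `∂ₓψ(t,x)` -/
def psiX (η : ℝ → ℝ → ℝ) (ϕ : ℝ → ℝ → ℝ → ℝ) (t x : ℝ) : ℝ :=
  deriv (fun x' => psi η ϕ t x') x

/-- `Θ(t,x) = -η ∂ₜψ - (g/2) η²` -/
def Theta (g : ℝ) (η : ℝ → ℝ → ℝ) (ϕ : ℝ → ℝ → ℝ → ℝ) (t x : ℝ) : ℝ :=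
  -(η t x) * psiT η ϕ t x - g / 2 * (η t x) ^ 2

/-- the energy `𝓗(t)` -/
def energy2D (L₁ h g : ℝ) (η : ℝ → ℝ → ℝ) (ϕ : ℝ → ℝ → ℝ → ℝ) (t : ℝ) : ℝ :=
  g / 2 * (∫ x in (0:ℝ)..L₁, (η t x) ^ 2)
    + 1 / 2 * ∫ x in (0:ℝ)..L₁, ∫ y in (-h)..(η t x),
        ((phiX ϕ t x y) ^ 2 + (phiY ϕ t x y) ^ 2)

/-- A smooth solution of the two-dimensional water-wave system on `[0,T]`:
`η : [0,T] × [0,L₁] → ℝ` and `ϕ` on the fluid domain (both given as smooth total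
functions), satisfying the incompressibility, boundary, kinematic and Bernoulli
(dynamic) conditions, together with `η ≥ -h/2`, zero mean, and the right-angle
contact conditions `∂ₓη(t,0) = ∂ₓη(t,L₁) = 0`. -/
structure IsWW2D (L₁ h g T : ℝ) (η : ℝ → ℝ → ℝ) (ϕ : ℝ → ℝ → ℝ → ℝ) : Prop where
  smooth_eta : ContDiff ℝ (⊤ : ℕ∞) (fun p : ℝ × ℝ => η p.1 p.2)
  smooth_phi : ContDiff ℝ (⊤ : ℕ∞) (fun p : ℝ × ℝ × ℝ => ϕ p.1 p.2.1 p.2.2)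
  eta_lower : ∀ t ∈ Icc (0:ℝ) T, ∀ x ∈ Icc (0:ℝ) L₁, -h / 2 ≤ η t x
  eta_mean : ∀ t ∈ Icc (0:ℝ) T, (∫ x in (0:ℝ)..L₁, η t x) = 0
  laplace : ∀ t ∈ Icc (0:ℝ) T, ∀ x ∈ Icc (0:ℝ) L₁, ∀ y ∈ Icc (-h) (η t x),
    deriv (fun x' => phiX ϕ t x' y) x + deriv (fun y' => phiY ϕ t x y') y = 0
  bc_left : ∀ t ∈ Icc (0:ℝ) T, ∀ y ∈ Icc (-h) (η t 0), phiX ϕ t 0 y = 0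
  bc_right : ∀ t ∈ Icc (0:ℝ) T, ∀ y ∈ Icc (-h) (η t L₁), phiX ϕ t L₁ y = 0
  bc_bottom : ∀ t ∈ Icc (0:ℝ) T, ∀ x ∈ Icc (0:ℝ) L₁, phiY ϕ t x (-h) = 0
  kinematic : ∀ t ∈ Icc (0:ℝ) T, ∀ x ∈ Icc (0:ℝ) L₁,
    etaT η t x = phiY ϕ t x (η t x) - etaX η t x * phiX ϕ t x (η t x)
  bernoulli : ∀ t ∈ Icc (0:ℝ) T, ∀ x ∈ Icc (0:ℝ) L₁,
    phiT ϕ t x (η t x)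
      + 1 / 2 * ((phiX ϕ t x (η t x)) ^ 2 + (phiY ϕ t x (η t x)) ^ 2) + g * η t x = 0
  etaX_left : ∀ t ∈ Icc (0:ℝ) T, etaX η t 0 = 0
  etaX_right : ∀ t ∈ Icc (0:ℝ) T, etaX η t L₁ = 0

/-!
Differentiating under the integral sign, with Leibniz's rule for the moving upper bound `η`, the
energy has derivative `∫₀^{L₁} e(t,x) dx` for an explicit density `e`. By the symmetry of mixed
partials and `Δϕ = 0`, `∂ₜ(|∇ϕ|²/2) = ∂ₓ(ϕₜϕₓ) + ∂_y(ϕₜϕ_y)`. Integrating over a vertical section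
(`ϕ_y = 0` on the bottom) and then using the kinematic and Bernoulli conditions on the surface turns
`e(t,x)` into the `x`-derivative of the flux `∫_{-h}^{η} ϕₜϕₓ dy`, which vanishes on the walls
`x = 0` and `x = L₁`, where `ϕₓ = 0`. Hence the energy has zero derivative.
-/

open Filter Topology ContinuousLinearMap
open scoped ContDiff

section IntervalIntegralLeibniz

variable {E : Type*} [NormedAddCommGroup E] [NormedSpace ℝ E]

theorem hasDerivAt_intervalIntegral_of_continuous {F F' : ℝ → ℝ → E}
    (hF : Continuous fun p : ℝ × ℝ => F p.1 p.2) (hF' : Continuous fun p : ℝ × ℝ => F' p.1 p.2)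
    (hderiv : ∀ t x, HasDerivAt (F · x) (F' t x) t) (a b t₀ : ℝ) :
    HasDerivAt (fun t => ∫ x in a..b, F t x) (∫ x in a..b, F' t₀ x) t₀ := by
  obtain ⟨C, hC⟩ :=
    (isCompact_closedBall t₀ 1 |>.prod isCompact_uIcc).exists_bound_of_continuousOn
      hF'.continuousOn
  refine (intervalIntegral.hasDerivAt_integral_of_dominated_loc_of_deriv_le
    (bound := fun _ => C) (Metric.closedBall_mem_nhds t₀ one_pos)
    (.of_forall fun t => (hF.comp (.prodMk_right t)).aestronglyMeasurable)
    ((hF.comp (.prodMk_right t₀)).intervalIntegrable a b)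
    (hF'.comp (.prodMk_right t₀)).aestronglyMeasurable
    (.of_forall fun x hx t ht => hC (t, x) ⟨ht, uIoc_subset_uIcc hx⟩)
    intervalIntegrable_const (.of_forall fun x _ t _ => hderiv t x)).2

theorem hasDerivAt_intervalIntegral_upper_of_continuous [CompleteSpace E] {F F' : ℝ → ℝ → E}
    (hF : Continuous fun p : ℝ × ℝ => F p.1 p.2) (hF' : Continuous fun p : ℝ × ℝ => F' p.1 p.2)
    (hderiv : ∀ t y, HasDerivAt (F · y) (F' t y) t) {u : ℝ → ℝ} {u' t₀ : ℝ}
    (hu : HasDerivAt u u' t₀) (a : ℝ) :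
    HasDerivAt (fun t => ∫ y in a..u t, F t y)
      ((∫ y in a..u t₀, F' t₀ y) + u' • F t₀ (u t₀)) t₀ := by
  let G : ℝ → ℝ → E := fun t s => ∫ y in a..s, F t y
  have hG : HasFDerivAt (Function.uncurry G)
      ((toSpanSingleton ℝ (∫ y in a..u t₀, F' t₀ y)).coprod (toSpanSingleton ℝ (F t₀ (u t₀))))
      (t₀, u t₀) := by
    refine (hasStrictFDerivAt_uncurry_coprod (f := G) (u := (t₀, u t₀))
      (f₁ := fun t s => toSpanSingleton ℝ (∫ y in a..s, F' t y))
      (f₂ := fun t s => toSpanSingleton ℝ (F t s))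
      (.of_forall fun p => ?_) (.of_forall fun p => ?_) ?_ ?_).hasFDerivAt
    · exact hasDerivAt_intervalIntegral_of_continuous hF hF' hderiv a p.2 p.1
    · exact intervalIntegral.integral_hasDerivAt_right
        ((hF.comp (.prodMk_right p.1)).intervalIntegrable _ _)
        ((hF.comp (.prodMk_right p.1)).stronglyMeasurableAtFilter _ _)
        (hF.comp (.prodMk_right p.1)).continuousAt
    · exact (toSpanSingletonCLE.continuous.comp
        (intervalIntegral.continuous_parametric_intervalIntegral_of_continuous
          (f := fun (q : ℝ × ℝ) (y : ℝ) => F' q.1 y)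
          (hF'.comp (continuous_fst.fst.prodMk continuous_snd)) continuous_snd)).continuousAt
    · exact (toSpanSingletonCLE.continuous.comp hF).continuousAt
  refine (hG.comp_hasDerivAt t₀ ((hasDerivAt_id t₀).prodMk hu)).congr_deriv ?_
  simp

end IntervalIntegralLeibniz

section PartialDerivatives

variable {ϕ : ℝ → ℝ → ℝ → ℝ} {η : ℝ → ℝ → ℝ}

theorem phiT_eq_fderiv (hϕ : Differentiable ℝ fun p : ℝ × ℝ × ℝ => ϕ p.1 p.2.1 p.2.2)
    (t x y : ℝ) :
    phiT ϕ t x y = fderiv ℝ (fun p : ℝ × ℝ × ℝ => ϕ p.1 p.2.1 p.2.2) (t, x, y) (1, 0, 0) :=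
  ((hϕ _).hasFDerivAt.comp_hasDerivAt t
    ((hasDerivAt_id t).prodMk ((hasDerivAt_const t x).prodMk (hasDerivAt_const t y)))).deriv

theorem phiX_eq_fderiv (hϕ : Differentiable ℝ fun p : ℝ × ℝ × ℝ => ϕ p.1 p.2.1 p.2.2)
    (t x y : ℝ) :
    phiX ϕ t x y = fderiv ℝ (fun p : ℝ × ℝ × ℝ => ϕ p.1 p.2.1 p.2.2) (t, x, y) (0, 1, 0) :=
  ((hϕ _).hasFDerivAt.comp_hasDerivAt x
    ((hasDerivAt_const x t).prodMk ((hasDerivAt_id x).prodMk (hasDerivAt_const x y)))).deriv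

theorem phiY_eq_fderiv (hϕ : Differentiable ℝ fun p : ℝ × ℝ × ℝ => ϕ p.1 p.2.1 p.2.2)
    (t x y : ℝ) :
    phiY ϕ t x y = fderiv ℝ (fun p : ℝ × ℝ × ℝ => ϕ p.1 p.2.1 p.2.2) (t, x, y) (0, 0, 1) :=
  ((hϕ _).hasFDerivAt.comp_hasDerivAt y
    ((hasDerivAt_const y t).prodMk ((hasDerivAt_const y x).prodMk (hasDerivAt_id y)))).deriv

theorem etaT_eq_fderiv (hη : Differentiable ℝ fun p : ℝ × ℝ => η p.1 p.2) (t x : ℝ) :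
    etaT η t x = fderiv ℝ (fun p : ℝ × ℝ => η p.1 p.2) (t, x) (1, 0) :=
  ((hη _).hasFDerivAt.comp_hasDerivAt t ((hasDerivAt_id t).prodMk (hasDerivAt_const t x))).deriv

theorem ContDiff.fderiv_apply_const {E : Type*} [NormedAddCommGroup E] [NormedSpace ℝ E]
    {F : E → ℝ} (hF : ContDiff ℝ ∞ F) (v : E) : ContDiff ℝ ∞ fun p => fderiv ℝ F p v :=
  (hF.fderiv_right le_rfl).clm_apply contDiff_const

theorem contDiff_phiT (hϕ : ContDiff ℝ ∞ fun p : ℝ × ℝ × ℝ => ϕ p.1 p.2.1 p.2.2) :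
    ContDiff ℝ ∞ fun p : ℝ × ℝ × ℝ => phiT ϕ p.1 p.2.1 p.2.2 := by
  simpa only [phiT_eq_fderiv (hϕ.differentiable (by simp))] using hϕ.fderiv_apply_const _

theorem contDiff_phiX (hϕ : ContDiff ℝ ∞ fun p : ℝ × ℝ × ℝ => ϕ p.1 p.2.1 p.2.2) :
    ContDiff ℝ ∞ fun p : ℝ × ℝ × ℝ => phiX ϕ p.1 p.2.1 p.2.2 := by
  simpa only [phiX_eq_fderiv (hϕ.differentiable (by simp))] using hϕ.fderiv_apply_const _

theorem contDiff_phiY (hϕ : ContDiff ℝ ∞ fun p : ℝ × ℝ × ℝ => ϕ p.1 p.2.1 p.2.2) :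
    ContDiff ℝ ∞ fun p : ℝ × ℝ × ℝ => phiY ϕ p.1 p.2.1 p.2.2 := by
  simpa only [phiY_eq_fderiv (hϕ.differentiable (by simp))] using hϕ.fderiv_apply_const _

theorem contDiff_etaT (hη : ContDiff ℝ ∞ fun p : ℝ × ℝ => η p.1 p.2) :
    ContDiff ℝ ∞ fun p : ℝ × ℝ => etaT η p.1 p.2 := by
  simpa only [etaT_eq_fderiv (hη.differentiable (by simp))] using hη.fderiv_apply_const _

theorem hasDerivAt_phiT (hϕ : Differentiable ℝ fun p : ℝ × ℝ × ℝ => ϕ p.1 p.2.1 p.2.2)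
    (t x y : ℝ) : HasDerivAt (ϕ · x y) (phiT ϕ t x y) t :=
  (hϕ.comp (by fun_prop : Differentiable ℝ fun s : ℝ => (s, x, y))).differentiableAt.hasDerivAt

theorem hasDerivAt_phiX (hϕ : Differentiable ℝ fun p : ℝ × ℝ × ℝ => ϕ p.1 p.2.1 p.2.2)
    (t x y : ℝ) : HasDerivAt (ϕ t · y) (phiX ϕ t x y) x :=
  (hϕ.comp (by fun_prop : Differentiable ℝ fun s : ℝ => (t, s, y))).differentiableAt.hasDerivAt

theorem hasDerivAt_phiY (hϕ : Differentiable ℝ fun p : ℝ × ℝ × ℝ => ϕ p.1 p.2.1 p.2.2)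
    (t x y : ℝ) : HasDerivAt (ϕ t x ·) (phiY ϕ t x y) y :=
  (hϕ.comp (by fun_prop : Differentiable ℝ fun s : ℝ => (t, x, s))).differentiableAt.hasDerivAt

theorem hasDerivAt_etaT (hη : Differentiable ℝ fun p : ℝ × ℝ => η p.1 p.2) (t x : ℝ) :
    HasDerivAt (η · x) (etaT η t x) t :=
  (hη.comp (by fun_prop : Differentiable ℝ fun s : ℝ => (s, x))).differentiableAt.hasDerivAt

theorem hasDerivAt_etaX (hη : Differentiable ℝ fun p : ℝ × ℝ => η p.1 p.2) (t x : ℝ) :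
    HasDerivAt (η t ·) (etaX η t x) x :=
  (hη.comp (by fun_prop : Differentiable ℝ fun s : ℝ => (t, s))).differentiableAt.hasDerivAt

theorem fderiv_fderiv_apply_comm {E : Type*} [NormedAddCommGroup E] [NormedSpace ℝ E]
    {F : E → ℝ} {n : WithTop ℕ∞} (hF : ContDiff ℝ n F) (hn : 2 ≤ n) (p v w : E) :
    fderiv ℝ (fun q => fderiv ℝ F q v) p w = fderiv ℝ (fun q => fderiv ℝ F q w) p v := by
  have hF' : Differentiable ℝ (fderiv ℝ F) :=
    (hF.fderiv_right (m := 1) hn).differentiable one_ne_zero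
  rw [fderiv_clm_apply (hF' p) (differentiableAt_const v),
    fderiv_clm_apply (hF' p) (differentiableAt_const w)]
  simpa using (hF.contDiffAt.isSymmSndFDerivAt (by simpa using hn)).eq w v

theorem phiT_phiX (hϕ : ContDiff ℝ ∞ fun p : ℝ × ℝ × ℝ => ϕ p.1 p.2.1 p.2.2) (t x y : ℝ) :
    phiT (phiX ϕ) t x y = phiX (phiT ϕ) t x y := by
  have hd := hϕ.differentiable (by simp)
  rw [phiT_eq_fderiv ((contDiff_phiX hϕ).differentiable (by simp)),
    phiX_eq_fderiv ((contDiff_phiT hϕ).differentiable (by simp))]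
  simp only [phiX_eq_fderiv hd, phiT_eq_fderiv hd]
  exact fderiv_fderiv_apply_comm hϕ ENat.LEInfty.out _ _ _

theorem phiT_phiY (hϕ : ContDiff ℝ ∞ fun p : ℝ × ℝ × ℝ => ϕ p.1 p.2.1 p.2.2) (t x y : ℝ) :
    phiT (phiY ϕ) t x y = phiY (phiT ϕ) t x y := by
  have hd := hϕ.differentiable (by simp)
  rw [phiT_eq_fderiv ((contDiff_phiY hϕ).differentiable (by simp)),
    phiY_eq_fderiv ((contDiff_phiT hϕ).differentiable (by simp))]
  simp only [phiY_eq_fderiv hd, phiT_eq_fderiv hd]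
  exact fderiv_fderiv_apply_comm hϕ ENat.LEInfty.out _ _ _

end PartialDerivatives

section WaterWaves

variable {L₁ h g T : ℝ} {η : ℝ → ℝ → ℝ} {ϕ : ℝ → ℝ → ℝ → ℝ}

def sectionFlux (h : ℝ) (η : ℝ → ℝ → ℝ) (ϕ : ℝ → ℝ → ℝ → ℝ) (t x : ℝ) : ℝ :=
  ∫ y in (-h)..η t x, phiT ϕ t x y * phiX ϕ t x y

def energyRateDensity (h g : ℝ) (η : ℝ → ℝ → ℝ) (ϕ : ℝ → ℝ → ℝ → ℝ) (t x : ℝ) : ℝ :=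
  g * η t x * etaT η t x
    + 1 / 2 * etaT η t x * (phiX ϕ t x (η t x) ^ 2 + phiY ϕ t x (η t x) ^ 2)
    + ∫ y in (-h)..η t x,
        (phiX ϕ t x y * phiT (phiX ϕ) t x y + phiY ϕ t x y * phiT (phiY ϕ) t x y)

theorem continuous_energyRateDensity (hη : ContDiff ℝ ∞ fun p : ℝ × ℝ => η p.1 p.2)
    (hϕ : ContDiff ℝ ∞ fun p : ℝ × ℝ × ℝ => ϕ p.1 p.2.1 p.2.2) (h g : ℝ) :
    Continuous fun p : ℝ × ℝ => energyRateDensity h g η ϕ p.1 p.2 := by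
  have := hη.continuous
  have := (contDiff_etaT hη).continuous
  have := (contDiff_phiX hϕ).continuous
  have := (contDiff_phiY hϕ).continuous
  have := (contDiff_phiT (contDiff_phiX hϕ)).continuous
  have := (contDiff_phiT (contDiff_phiY hϕ)).continuous
  unfold energyRateDensity
  fun_prop

theorem hasDerivAt_energy2D (hη : ContDiff ℝ ∞ fun p : ℝ × ℝ => η p.1 p.2)
    (hϕ : ContDiff ℝ ∞ fun p : ℝ × ℝ × ℝ => ϕ p.1 p.2.1 p.2.2) (L₁ h g t : ℝ) :
    HasDerivAt (energy2D L₁ h g η ϕ) (∫ x in (0:ℝ)..L₁, energyRateDensity h g η ϕ t x) t := by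
  have hηd := hη.differentiable (by simp)
  have := hη.continuous
  have := (contDiff_phiX hϕ).continuous
  have := (contDiff_phiY hϕ).continuous
  have := (contDiff_phiT (contDiff_phiX hϕ)).continuous
  have := (contDiff_phiT (contDiff_phiY hϕ)).continuous
  have hsplit : energy2D L₁ h g η ϕ = fun t => ∫ x in (0:ℝ)..L₁,
      (g / 2 * η t x ^ 2
        + 1 / 2 * ∫ y in (-h)..η t x, (phiX ϕ t x y ^ 2 + phiY ϕ t x y ^ 2)) := by
    ext t
    rw [intervalIntegral.integral_add (by apply Continuous.intervalIntegrable; fun_prop)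
      (by apply Continuous.intervalIntegrable; fun_prop), intervalIntegral.integral_const_mul,
      intervalIntegral.integral_const_mul]
    rfl
  have hcolumn : ∀ t x,
      HasDerivAt (fun t => ∫ y in (-h)..η t x, (phiX ϕ t x y ^ 2 + phiY ϕ t x y ^ 2))
        ((∫ y in (-h)..η t x,
            2 * (phiX ϕ t x y * phiT (phiX ϕ) t x y + phiY ϕ t x y * phiT (phiY ϕ) t x y))
          + etaT η t x • (phiX ϕ t x (η t x) ^ 2 + phiY ϕ t x (η t x) ^ 2)) t := by
    intro t x
    refine hasDerivAt_intervalIntegral_upper_of_continuous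
      (F := fun t y => phiX ϕ t x y ^ 2 + phiY ϕ t x y ^ 2)
      (F' := fun t y =>
        2 * (phiX ϕ t x y * phiT (phiX ϕ) t x y + phiY ϕ t x y * phiT (phiY ϕ) t x y))
      (by fun_prop) (by fun_prop) (fun s y => ?_) (hasDerivAt_etaT hηd t x) (-h)
    refine (((hasDerivAt_phiT ((contDiff_phiX hϕ).differentiable (by simp)) s x y).pow 2).add
      ((hasDerivAt_phiT ((contDiff_phiY hϕ).differentiable (by simp)) s x y).pow 2)).congr_deriv ?_
    ring
  rw [hsplit]
  refine hasDerivAt_intervalIntegral_of_continuous (by fun_prop)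
    (continuous_energyRateDensity hη hϕ h g) (fun t x => ?_) 0 L₁ t
  refine (((hasDerivAt_etaT hηd t x).pow 2).const_mul _ |>.add
    ((hcolumn t x).const_mul _)).congr_deriv ?_
  simp only [energyRateDensity, intervalIntegral.integral_const_mul, smul_eq_mul]
  ring

theorem hasDerivAt_sectionFlux (hη : Differentiable ℝ fun p : ℝ × ℝ => η p.1 p.2)
    (hϕ : ContDiff ℝ ∞ fun p : ℝ × ℝ × ℝ => ϕ p.1 p.2.1 p.2.2) (h t x : ℝ) :
    HasDerivAt (sectionFlux h η ϕ t)
      ((∫ y in (-h)..η t x,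
          (phiX (phiT ϕ) t x y * phiX ϕ t x y + phiT ϕ t x y * phiX (phiX ϕ) t x y))
        + etaX η t x • (phiT ϕ t x (η t x) * phiX ϕ t x (η t x))) x := by
  have := (contDiff_phiT hϕ).continuous
  have := (contDiff_phiX hϕ).continuous
  have := (contDiff_phiX (contDiff_phiT hϕ)).continuous
  have := (contDiff_phiX (contDiff_phiX hϕ)).continuous
  exact hasDerivAt_intervalIntegral_upper_of_continuous
    (F := fun x y => phiT ϕ t x y * phiX ϕ t x y) (by fun_prop) (by fun_prop)
    (fun x y => (hasDerivAt_phiX ((contDiff_phiT hϕ).differentiable (by simp)) t x y).mul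
      (hasDerivAt_phiX ((contDiff_phiX hϕ).differentiable (by simp)) t x y))
    (hasDerivAt_etaX hη t x) (-h)

theorem sectionFlux_eq_zero_of_phiX_eq_zero {t x : ℝ} (hη : -h ≤ η t x)
    (hwall : ∀ y ∈ Icc (-h) (η t x), phiX ϕ t x y = 0) : sectionFlux h η ϕ t x = 0 := by
  rw [sectionFlux, ← intervalIntegral.integral_zero (a := -h) (b := η t x)]
  refine intervalIntegral.integral_congr fun y hy => ?_
  rw [uIcc_of_le hη] at hy
  simp [hwall y hy]

namespace IsWW2D

theorem integral_kineticRate_column (hsol : IsWW2D L₁ h g T η ϕ) (hh : 0 ≤ h) {t x : ℝ}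
    (ht : t ∈ Icc 0 T) (hx : x ∈ Icc 0 L₁) :
    ∫ y in (-h)..η t x, (phiX ϕ t x y * phiT (phiX ϕ) t x y + phiY ϕ t x y * phiT (phiY ϕ) t x y)
      = (∫ y in (-h)..η t x,
          (phiX (phiT ϕ) t x y * phiX ϕ t x y + phiT ϕ t x y * phiX (phiX ϕ) t x y))
        + phiT ϕ t x (η t x) * phiY ϕ t x (η t x) := by
  have hϕ := hsol.smooth_phi
  have := (contDiff_phiT hϕ).continuous
  have := (contDiff_phiX hϕ).continuous
  have := (contDiff_phiY hϕ).continuous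
  have := (contDiff_phiX (contDiff_phiT hϕ)).continuous
  have := (contDiff_phiX (contDiff_phiX hϕ)).continuous
  have := (contDiff_phiY (contDiff_phiT hϕ)).continuous
  have := (contDiff_phiY (contDiff_phiY hϕ)).continuous
  have hcolumn : -h ≤ η t x := by linarith [hsol.eta_lower t ht x hx]
  have hdiv : ∀ y ∈ uIcc (-h) (η t x),
      phiX ϕ t x y * phiT (phiX ϕ) t x y + phiY ϕ t x y * phiT (phiY ϕ) t x y
        = (phiX (phiT ϕ) t x y * phiX ϕ t x y + phiT ϕ t x y * phiX (phiX ϕ) t x y)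
          + (phiY (phiT ϕ) t x y * phiY ϕ t x y + phiT ϕ t x y * phiY (phiY ϕ) t x y) := by
    intro y hy
    rw [uIcc_of_le hcolumn] at hy
    have hlaplace : phiX (phiX ϕ) t x y + phiY (phiY ϕ) t x y = 0 := hsol.laplace t ht x hx y hy
    rw [phiT_phiX hϕ, phiT_phiY hϕ]
    linear_combination -phiT ϕ t x y * hlaplace
  have hvertical : ∫ y in (-h)..η t x,
      (phiY (phiT ϕ) t x y * phiY ϕ t x y + phiT ϕ t x y * phiY (phiY ϕ) t x y)
        = phiT ϕ t x (η t x) * phiY ϕ t x (η t x) - phiT ϕ t x (-h) * phiY ϕ t x (-h) :=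
    intervalIntegral.integral_eq_sub_of_hasDerivAt
      (fun y _ => (hasDerivAt_phiY ((contDiff_phiT hϕ).differentiable (by simp)) t x y).mul
        (hasDerivAt_phiY ((contDiff_phiY hϕ).differentiable (by simp)) t x y))
      (by apply Continuous.intervalIntegrable; fun_prop)
  rw [intervalIntegral.integral_congr hdiv, intervalIntegral.integral_add
    (by apply Continuous.intervalIntegrable; fun_prop)
    (by apply Continuous.intervalIntegrable; fun_prop), hvertical, hsol.bc_bottom t ht x hx]
  ring

theorem hasDerivAt_sectionFlux_energyRateDensity (hsol : IsWW2D L₁ h g T η ϕ) (hh : 0 ≤ h)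
    {t x : ℝ} (ht : t ∈ Icc 0 T) (hx : x ∈ Icc 0 L₁) :
    HasDerivAt (sectionFlux h η ϕ t) (energyRateDensity h g η ϕ t x) x := by
  refine (hasDerivAt_sectionFlux (hsol.smooth_eta.differentiable (by simp)) hsol.smooth_phi h t x
    ).congr_deriv ?_
  rw [energyRateDensity, hsol.integral_kineticRate_column hh ht hx, smul_eq_mul]
  linear_combination phiT ϕ t x (η t x) * hsol.kinematic t ht x hx
    - etaT η t x * hsol.bernoulli t ht x hx

theorem integral_energyRateDensity_eq_zero (hsol : IsWW2D L₁ h g T η ϕ) (hL : 0 ≤ L₁)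
    (hh : 0 ≤ h) {t : ℝ} (ht : t ∈ Icc 0 T) :
    ∫ x in (0:ℝ)..L₁, energyRateDensity h g η ϕ t x = 0 := by
  have hwall : ∀ x ∈ Icc 0 L₁, -h ≤ η t x := fun x hx => by
    linarith [hsol.eta_lower t ht x hx]
  rw [intervalIntegral.integral_eq_sub_of_hasDerivAt
      (fun x hx => hsol.hasDerivAt_sectionFlux_energyRateDensity hh ht (uIcc_of_le hL ▸ hx))
      (((continuous_energyRateDensity hsol.smooth_eta hsol.smooth_phi h g).comp
        (.prodMk_right t)).intervalIntegrable _ _),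
    sectionFlux_eq_zero_of_phiX_eq_zero (hwall L₁ ⟨hL, le_rfl⟩) (hsol.bc_right t ht),
    sectionFlux_eq_zero_of_phiX_eq_zero (hwall 0 ⟨le_rfl, hL⟩) (hsol.bc_left t ht), sub_zero]

end IsWW2D

end WaterWaves

theorem energy_conservation_2d_general
    (L₁ h g T : ℝ) (hL : 0 < L₁) (hh : 0 < h)
    (η : ℝ → ℝ → ℝ) (ϕ : ℝ → ℝ → ℝ → ℝ) (hsol : IsWW2D L₁ h g T η ϕ) :
    ∀ t ∈ Icc (0:ℝ) T, energy2D L₁ h g η ϕ t = energy2D L₁ h g η ϕ 0 := by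
  have hderiv := hasDerivAt_energy2D hsol.smooth_eta hsol.smooth_phi L₁ h g
  refine constant_of_has_deriv_right_zero (fun t _ => (hderiv t).continuousAt.continuousWithinAt)
    fun t ht => ?_
  rw [← hsol.integral_energyRateDensity_eq_zero hL.le hh.le (Ico_subset_Icc_self ht)]
  exact (hderiv t).hasDerivWithinAt

/-- conservation of the energy `𝓗(t)` for two-dimensional waves. -/
theorem energy_conservation_2d
    (L₁ h g T : ℝ) (hL : 0 < L₁) (hh : 0 < h) (hg : 0 < g) (hT : 0 < T)
    (η : ℝ → ℝ → ℝ) (ϕ : ℝ → ℝ → ℝ → ℝ) (hsol : IsWW2D L₁ h g T η ϕ) :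
    ∀ t ∈ Icc (0:ℝ) T, energy2D L₁ h g η ϕ t = energy2D L₁ h g η ϕ 0 :=
  energy_conservation_2d_general L₁ h g T hL hh η ϕ hsol
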